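/- Let λ ⊆ ℤ² be a lattice of determinant d ∼ D with basis given by the rows of a matrix B with det B = d, B₁₁ > 0 and gcd(B₁₁, B₂₁) = 1, and let \bar{B₂₁} be an integer inverse of B₂₁ modulo B₁₁. Let α = (α_m) be a sequence with |α_m| ≤ 1. Then for any δ > 0 and any A > 0, ψ(λ,N,α) = (N Ŵ(0)/d) Σ_{m≤N} α_m + ψ₁(λ,N,α,δ) + O_{δ,A}(N^{−A}), where ψ₁(λ,N,α,δ) = (N/d) Σ_{0<|v|≤DN^{−1+δ}} Ŵ(vN/d) Σ_{0<m≤N} α_m e( m v (B₁₂ + d·\bar{B₂₁}) / (d·B₁₁) ). -/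

import Mathlib

open scoped Classical

noncomputable section

/-- `e(t) = e^{2πit}`. -/
def eFn (t : ℝ) : ℂ := Complex.exp (2 * Real.pi * Complex.I * t)

/-- `ψ(λ,N,α) = Σ_{(m,n) ∈ λ, 0 < m ≤ N} α_m W(n/N)`. -/
def psi (L : Submodule ℤ (ℤ × ℤ)) (N : ℕ) (α : ℤ → ℂ) (W : ℝ → ℝ) : ℂ :=
  ∑' p : ℤ × ℤ,
    if p ∈ L ∧ 0 < p.1 ∧ p.1 ≤ (N : ℤ) then α p.1 * (W ((p.2 : ℝ) / (N : ℝ)) : ℂ) else 0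

open MeasureTheory Filter Finset

lemma eFn_eq (t : ℝ) : eFn t = Complex.exp ((t : ℂ) * Complex.I * (2 * Real.pi)) := by
  unfold eFn; ring_nf

lemma norm_eFn (t : ℝ) : ‖eFn t‖ = 1 := by
  have : eFn t = Complex.exp (((2 * Real.pi * t : ℝ) : ℂ) * Complex.I) := by
    unfold eFn; push_cast; ring_nf
  rw [this]
  exact Complex.norm_exp_ofReal_mul_I _

lemma eFn_zero : eFn 0 = 1 := by simp [eFn]

section W

variable {W : ℝ → ℝ} (hW1 : ContDiff ℝ (⊤ : ℕ∞) W) (hW3 : tsupport W ⊆ Set.Icc 0 1)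

/-- complexified W -/
def Wc (W : ℝ → ℝ) : ℝ → ℂ := fun x => (W x : ℂ)

include hW3 in
lemma hcsW : HasCompactSupport W :=
  IsCompact.of_isClosed_subset isCompact_Icc (isClosed_tsupport W) hW3

include hW3 in
lemma hcsWc : HasCompactSupport (Wc W) :=
  (hcsW hW3).comp_left (g := fun r : ℝ => (r : ℂ)) (by simp)

include hW1 in
lemma hcdWc : ContDiff ℝ (⊤ : ℕ∞) (Wc W) :=
  Complex.ofRealCLM.contDiff.comp hW1

include hW3 in
lemma W_eq_zero {x : ℝ} (hx : x ∉ Set.Icc (0:ℝ) 1) : W x = 0 :=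
  image_eq_zero_of_notMem_tsupport (fun h => hx (hW3 h))

/-- Schwartz map version of W. -/
def WS (W : ℝ → ℝ) (hW1 : ContDiff ℝ (⊤ : ℕ∞) W) (hW3 : tsupport W ⊆ Set.Icc 0 1) :
    SchwartzMap ℝ ℂ where
  toFun := Wc W
  smooth' := (hcdWc hW1).of_le (by simp)
  decay' := by
    intro k n
    have hcs : HasCompactSupport (iteratedFDeriv ℝ n (Wc W)) :=
      (hcsWc hW3).iteratedFDeriv n
    have hcont : Continuous fun x => ‖x‖ ^ k * ‖iteratedFDeriv ℝ n (Wc W) x‖ :=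
      ((continuous_norm.pow k)).mul ((hcdWc hW1).continuous_iteratedFDeriv (by exact_mod_cast le_top)).norm
    have hcs2 : HasCompactSupport fun x : ℝ => ‖x‖ ^ k * ‖iteratedFDeriv ℝ n (Wc W) x‖ := by
      apply HasCompactSupport.mul_left
      exact hcs.norm
    obtain ⟨C, hC⟩ := hcont.bounded_above_of_compact_support hcs2
    exact ⟨C, fun x => le_trans (le_abs_self _) (hC x)⟩

include hW1 hW3 in
/-- Decay of the Fourier transform of W. -/
lemma decayW (k : ℕ) : ∃ C : ℝ, 0 < C ∧ ∀ ξ : ℝ, |ξ| ^ k * ‖FourierTransform.fourier (Wc W) ξ‖ ≤ C := by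
  obtain ⟨C, hC0, hC⟩ := (SchwartzMap.fourierTransformCLM ℝ (WS W hW1 hW3)).decay k 0
  refine ⟨C, hC0, fun ξ => ?_⟩
  have := hC ξ
  rw [norm_iteratedFDeriv_zero, SchwartzMap.fourierTransformCLM_apply, SchwartzMap.fourier_coe, Real.norm_eq_abs] at this
  exact this

end W

/-- Fourier transform under affine substitution. -/
lemma ft_affine (f : ℝ → ℂ) {a : ℝ} (ha : 0 < a) (b ξ : ℝ) :
    FourierTransform.fourier (fun x => f (a * x + b)) ξ
      = (a⁻¹ : ℝ) • (eFn (ξ * b / a) * FourierTransform.fourier f (ξ / a)) := by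
  have ha' : a ≠ 0 := ne_of_gt ha
  rw [Real.fourier_real_eq_integral_exp_smul]
  set H : ℝ → ℂ := fun y => Complex.exp ((-2 * Real.pi * ((y - b)/a) * ξ : ℝ) * Complex.I) • f y
    with hH
  have key : ∀ x : ℝ, Complex.exp ((-2 * Real.pi * x * ξ : ℝ) * Complex.I) • f (a * x + b)
      = H (a * x + b) := by
    intro x
    simp only [hH]
    congr 2
    rw [add_sub_cancel_right, mul_div_cancel_left₀ _ ha']
  simp_rw [key]
  have h2 : ∀ x : ℝ, H (a * x + b) = (fun y => H (a * y)) (x + b / a) := by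
    intro x
    congr 1
    field_simp
  simp_rw [h2]
  rw [integral_add_right_eq_self (fun y => H (a * y)) (b / a)]
  rw [MeasureTheory.Measure.integral_comp_mul_left H a]
  have h3 : ∀ y : ℝ, H y = eFn (ξ * b / a) * (Complex.exp ((-2 * Real.pi * y * (ξ/a) : ℝ) * Complex.I) • f y) := by
    intro y
    simp only [hH, smul_eq_mul, eFn]
    rw [← mul_assoc, ← Complex.exp_add]
    congr 1
    push_cast
    field_simp
    ring
  simp_rw [h3]
  rw [MeasureTheory.integral_const_mul]
  rw [← Real.fourier_real_eq_integral_exp_smul]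
  rw [abs_of_pos (by positivity : (0:ℝ) < a⁻¹)]

section Poisson

variable {W : ℝ → ℝ} (hW1 : ContDiff ℝ (⊤ : ℕ∞) W) (hW3 : tsupport W ⊆ Set.Icc 0 1)

include hW1 hW3 in
lemma poissonW (d N : ℕ) (hd : 0 < d) (hN : 0 < N) (c : ℤ) :
    ∑' t : ℤ, Wc W (((c : ℝ) + d * t) / N)
      = ((N : ℂ) / d) * ∑' v : ℤ,
          FourierTransform.fourier (Wc W) ((v : ℝ) * N / d) * eFn ((v : ℝ) * c / d) := by
  have hdR : (0:ℝ) < d := by exact_mod_cast hd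
  have hNR : (0:ℝ) < N := by exact_mod_cast hN
  set a : ℝ := (d : ℝ) / N with ha_def
  have ha : 0 < a := by positivity
  set b : ℝ := (c : ℝ) / N with hb_def
  set g : ℝ → ℂ := fun x => Wc W (a * x + b) with hg_def
  -- decay of g
  have hsupp : ∀ x : ℝ, x ∉ Set.Icc ((0 - b)/a) ((1 - b)/a) → g x = 0 := by
    intro x hx
    have hnm : a * x + b ∉ Set.Icc (0:ℝ) 1 := by
      intro hmem
      exact hx ⟨by rw [div_le_iff₀ ha]; nlinarith [hmem.1],
        by rw [le_div_iff₀ ha]; nlinarith [hmem.2]⟩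
    simp only [hg_def, Wc]
    rw [W_eq_zero hW3 hnm]
    simp
  have hg_bigO : g =O[cocompact ℝ] fun x => |x| ^ (-2 : ℝ) := by
    rw [Asymptotics.isBigO_iff]
    refine ⟨0, ?_⟩
    filter_upwards [mem_cocompact.mpr ⟨Set.Icc ((0 - b)/a) ((1 - b)/a), isCompact_Icc,
      subset_rfl⟩] with x hx
    rw [hsupp x hx]
    simp
  -- Fourier transform of g
  have hFg : ∀ ξ : ℝ, FourierTransform.fourier g ξ
      = (a⁻¹ : ℝ) • (eFn (ξ * b / a) * FourierTransform.fourier (Wc W) (ξ / a)) := fun ξ =>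
    ft_affine (Wc W) ha b ξ
  obtain ⟨C2, hC20, hC2⟩ := decayW hW1 hW3 2
  have hFg_bigO : (FourierTransform.fourier g) =O[cocompact ℝ] fun x => |x| ^ (-2 : ℝ) := by
    rw [Asymptotics.isBigO_iff]
    refine ⟨a⁻¹ * C2 * a ^ 2, ?_⟩
    filter_upwards [mem_cocompact.mpr ⟨{(0:ℝ)}, isCompact_singleton, subset_rfl⟩] with ξ hξ
    have hξ0 : ξ ≠ 0 := by simpa using hξ
    rw [hFg ξ]
    have h1 : ‖FourierTransform.fourier g ξ‖ = a⁻¹ * ‖FourierTransform.fourier (Wc W) (ξ / a)‖ := by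
      rw [hFg ξ, norm_smul, norm_mul, norm_eFn, Real.norm_eq_abs, abs_of_pos (by positivity),
        one_mul]
    rw [← hFg ξ, h1]
    have h2 : ‖FourierTransform.fourier (Wc W) (ξ / a)‖ ≤ C2 * a ^ 2 * |ξ|⁻¹ ^ 2 := by
      have := hC2 (ξ / a)
      have habs : |ξ / a| ^ 2 > 0 := by positivity
      rw [← le_div_iff₀' habs] at this
      calc ‖FourierTransform.fourier (Wc W) (ξ / a)‖ ≤ C2 / |ξ / a| ^ 2 := this
        _ = C2 * a ^ 2 * |ξ|⁻¹ ^ 2 := by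
            rw [abs_div, abs_of_pos ha]
            have : |ξ| ≠ 0 := by simpa using hξ0
            field_simp
    have h3 : ‖|ξ| ^ (-2:ℝ)‖ = |ξ|⁻¹ ^ 2 := by
      rw [Real.norm_eq_abs, abs_of_nonneg (Real.rpow_nonneg (abs_nonneg _) _)]
      rw [show (-2:ℝ) = -(2:ℕ) by norm_num, Real.rpow_neg (abs_nonneg _), Real.rpow_natCast,
        inv_pow]
    rw [h3]
    calc a⁻¹ * ‖FourierTransform.fourier (Wc W) (ξ / a)‖ ≤ a⁻¹ * (C2 * a ^ 2 * |ξ|⁻¹ ^ 2) := by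
          apply mul_le_mul_of_nonneg_left h2 (by positivity)
      _ = a⁻¹ * C2 * a ^ 2 * |ξ|⁻¹ ^ 2 := by ring
  -- Poisson summation
  have hcont : Continuous g :=
    (hcdWc hW1).continuous.comp ((continuous_const.mul continuous_id).add continuous_const)
  have hP := Real.tsum_eq_tsum_fourier_of_rpow_decay hcont (by norm_num : (1:ℝ) < 2)
    hg_bigO hFg_bigO 0
  have hL : ∀ t : ℤ, g (0 + (t:ℝ)) = Wc W (((c : ℝ) + d * t) / N) := by
    intro t
    simp only [hg_def, zero_add]
    congr 1
    rw [ha_def, hb_def, div_mul_eq_mul_div, ← add_div]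
    ring
  have hR : ∀ v : ℤ, FourierTransform.fourier g v * fourier v ((0:ℝ) : UnitAddCircle)
      = ((N : ℂ) / d) * (FourierTransform.fourier (Wc W) ((v : ℝ) * N / d) * eFn ((v : ℝ) * c / d)) := by
    intro v
    have h0 : ((0:ℝ) : UnitAddCircle) = 0 := by norm_num
    have hba : (v:ℝ) * b / a = (v:ℝ) * c / d := by
      rw [hb_def, ha_def]
      field_simp
    have hxa : (v:ℝ) / a = (v:ℝ) * N / d := by
      rw [ha_def]
      field_simp
    rw [h0, fourier_eval_zero, mul_one, hFg v, hba, hxa, Complex.real_smul]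
    have hconv : ((a⁻¹ : ℝ) : ℂ) = (N : ℂ) / d := by
      rw [ha_def]
      push_cast
      rw [inv_div]
    rw [hconv]
    ring
  calc ∑' t : ℤ, Wc W (((c : ℝ) + d * t) / N) = ∑' t : ℤ, g (0 + (t:ℝ)) := by
        exact (tsum_congr hL).symm
    _ = ∑' v : ℤ, FourierTransform.fourier g v * fourier v ((0:ℝ) : UnitAddCircle) := hP
    _ = ∑' v : ℤ, ((N : ℂ) / d) * (FourierTransform.fourier (Wc W) ((v : ℝ) * N / d)
          * eFn ((v : ℝ) * c / d)) := tsum_congr hR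
    _ = _ := tsum_mul_left

end Poisson

section Lattice

lemma lattice_char (d : ℕ) (B : Matrix (Fin 2) (Fin 2) ℤ) (L : Submodule ℤ (ℤ × ℤ))
    (hL : L = Submodule.span ℤ {(B 0 0, B 0 1), (B 1 0, B 1 1)})
    (hdet : B.det = (d : ℤ)) (hpos : 0 < B 0 0) (hcop : IsCoprime (B 0 0) (B 1 0))
    (Bbar : ℤ) (hBbar : B 0 0 ∣ (Bbar * B 1 0 - 1)) :
    ∃ q : ℤ, B 0 0 * q = B 0 1 + (d : ℤ) * Bbar ∧
      ∀ p : ℤ × ℤ, (p ∈ L ↔ (d : ℤ) ∣ (p.2 - p.1 * q)) := by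
  obtain ⟨k, hk⟩ := hBbar
  have hdet2 : B 0 0 * B 1 1 - B 0 1 * B 1 0 = (d : ℤ) := by
    rw [← hdet, Matrix.det_fin_two]
  set q : ℤ := B 1 1 * Bbar - B 0 1 * k with hq_def
  have hq : B 0 0 * q = B 0 1 + (d : ℤ) * Bbar := by
    rw [hq_def, ← hdet2]
    linear_combination (B 0 1) * hk
  refine ⟨q, hq, ?_⟩
  have hg1 : (d : ℤ) ∣ (B 0 1 - B 0 0 * q) := ⟨-Bbar, by linear_combination -hq⟩
  have hg2 : (d : ℤ) ∣ (B 1 1 - B 1 0 * q) := by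
    refine ⟨-k, ?_⟩
    have hcancel : B 0 0 * (B 1 1 - B 1 0 * q) = B 0 0 * ((d : ℤ) * (-k)) := by
      linear_combination (-(B 1 0)) * hq + hdet2 - (d : ℤ) * hk
    exact mul_left_cancel₀ (ne_of_gt hpos) hcancel
  -- forward direction
  have hfwd : ∀ p : ℤ × ℤ, p ∈ L → (d : ℤ) ∣ (p.2 - p.1 * q) := by
    intro p hp
    rw [hL, Submodule.mem_span_pair] at hp
    obtain ⟨x, y, hxy⟩ := hp
    have h1 : p.1 = x * B 0 0 + y * B 1 0 := by
      rw [← hxy]; simp [Prod.smul_def, smul_eq_mul]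
    have h2 : p.2 = x * B 0 1 + y * B 1 1 := by
      rw [← hxy]; simp [Prod.smul_def, smul_eq_mul]
    have : p.2 - p.1 * q = x * (B 0 1 - B 0 0 * q) + y * (B 1 1 - B 1 0 * q) := by
      rw [h1, h2]; ring
    rw [this]
    exact dvd_add (Dvd.dvd.mul_left hg1 x) (Dvd.dvd.mul_left hg2 y)
  -- membership of (0, d) and (1, q)
  have h0d : ((0 : ℤ), (d : ℤ)) ∈ L := by
    rw [hL, Submodule.mem_span_pair]
    refine ⟨-(B 1 0), B 0 0, ?_⟩
    have : -(B 1 0) * B 0 0 + B 0 0 * B 1 0 = 0 := by ring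
    refine Prod.ext ?_ ?_ <;> simp [Prod.smul_def, smul_eq_mul]
    · ring
    · linear_combination hdet2
  have h1q : ((1 : ℤ), q) ∈ L := by
    obtain ⟨u, v, huv⟩ := hcop
    have hmem : ((1 : ℤ), u * B 0 1 + v * B 1 1) ∈ L := by
      rw [hL, Submodule.mem_span_pair]
      exact ⟨u, v, Prod.ext (by simpa [Prod.smul_def, smul_eq_mul] using huv)
        (by simp [Prod.smul_def, smul_eq_mul])⟩
    obtain ⟨t, ht⟩ := hfwd _ hmem
    simp only at ht
    have heq : ((1 : ℤ), q) = ((1 : ℤ), u * B 0 1 + v * B 1 1) + (-t) • ((0 : ℤ), (d : ℤ)) := by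
      refine Prod.ext (by simp) ?_
      simp only [Prod.snd_add, Prod.smul_def, smul_eq_mul]
      linarith [ht]
    rw [heq]
    exact L.add_mem hmem (L.smul_mem (-t) h0d)
  intro p
  refine ⟨hfwd p, fun hdvd => ?_⟩
  obtain ⟨t, ht⟩ := hdvd
  have heq : p = p.1 • ((1 : ℤ), q) + t • ((0 : ℤ), (d : ℤ)) := by
    refine Prod.ext ?_ ?_ <;> simp only [Prod.fst_add, Prod.snd_add, Prod.smul_def, smul_eq_mul]
    · ring
    · linarith [ht]
  rw [heq]
  exact L.add_mem (L.smul_mem p.1 h1q) (L.smul_mem t h0d)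

end Lattice

section PsiEq

variable {W : ℝ → ℝ} (hW1 : ContDiff ℝ (⊤ : ℕ∞) W) (hW3 : tsupport W ⊆ Set.Icc 0 1)

include hW3 in
lemma psi_eq (d N : ℕ) (hd : 1 ≤ d) (hN : 1 ≤ N) (q : ℤ) (L : Submodule ℤ (ℤ × ℤ))
    (hchar : ∀ p : ℤ × ℤ, p ∈ L ↔ (d : ℤ) ∣ (p.2 - p.1 * q)) (α : ℤ → ℂ) :
    psi L N α W = ∑ m ∈ Finset.Icc (1 : ℤ) (N : ℤ),
      α m * ∑' t : ℤ, Wc W ((((m * q : ℤ) : ℝ) + (d : ℝ) * (t : ℝ)) / (N : ℝ)) := by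
  have hNR : (0:ℝ) < N := by exact_mod_cast hN
  have hdZ : (d:ℤ) ≠ 0 := by exact_mod_cast Nat.one_le_iff_ne_zero.mp hd
  -- step 1 : reduce the tsum to a finite sum over a box
  have hzero : ∀ n : ℤ, n ∉ Finset.Icc (0:ℤ) (N:ℤ) → W ((n:ℝ)/(N:ℝ)) = 0 := by
    intro n hn
    apply W_eq_zero hW3
    intro ⟨h1, h2⟩
    apply hn
    rw [Finset.mem_Icc]
    constructor
    · have : (0:ℝ) ≤ (n:ℝ) := by
        have := mul_le_mul_of_nonneg_right h1 (le_of_lt hNR)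
        rw [zero_mul, div_mul_cancel₀] at this
        · exact this
        · exact ne_of_gt hNR
      exact_mod_cast this
    · have : (n:ℝ) ≤ (N:ℝ) := by
        rw [div_le_one hNR] at h2
        exact h2
      exact_mod_cast this
  have hbox : ∀ p : ℤ × ℤ, p ∉ (Finset.Icc (1:ℤ) (N:ℤ)) ×ˢ (Finset.Icc (0:ℤ) (N:ℤ)) →
      (if p ∈ L ∧ 0 < p.1 ∧ p.1 ≤ (N : ℤ) then α p.1 * (W ((p.2 : ℝ) / (N : ℝ)) : ℂ) else 0) = 0 := by
    intro p hp
    rw [Finset.mem_product, not_and_or] at hp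
    rcases hp with hp | hp
    · rw [if_neg]
      intro ⟨_, h1, h2⟩
      exact hp (Finset.mem_Icc.mpr ⟨h1, h2⟩)
    · split_ifs with h
      · rw [hzero p.2 hp]
        simp
      · rfl
  rw [psi, tsum_eq_sum hbox, Finset.sum_product]
  apply Finset.sum_congr rfl
  intro m hm
  rw [Finset.mem_Icc] at hm
  -- step 2 : inner sum
  set fm : ℤ → ℂ := fun n => if (d : ℤ) ∣ n - m * q then Wc W ((n:ℝ)/(N:ℝ)) else 0 with hfm_def
  have hstep : ∀ n ∈ Finset.Icc (0:ℤ) (N:ℤ),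
      (if (m, n) ∈ L ∧ 0 < m ∧ m ≤ (N : ℤ) then α m * (W ((n : ℝ) / (N : ℝ)) : ℂ) else 0)
        = α m * fm n := by
    intro n _
    rw [hfm_def]
    simp only
    rw [hchar (m, n)]
    simp only
    split_ifs with h1 h2 h2
    · rfl
    · exact absurd h1.1 h2
    · exact absurd ⟨h2, hm.1, hm.2⟩ h1
    · simp
  rw [Finset.sum_congr rfl hstep, ← Finset.mul_sum]
  congr 1
  -- step 3 : finite sum back to tsum over n, then reindex by t
  have hfm_zero : ∀ n : ℤ, n ∉ Finset.Icc (0:ℤ) (N:ℤ) → fm n = 0 := by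
    intro n hn
    rw [hfm_def]
    simp only
    split_ifs
    · rw [Wc, hzero n hn]; simp
    · rfl
  rw [← tsum_eq_sum (L := SummationFilter.unconditional ℤ) hfm_zero]
  have hinj : Function.Injective (fun t : ℤ => m * q + d * t) := by
    intro s t hst
    simp only at hst
    have : (d:ℤ) * s = d * t := by linarith
    exact mul_left_cancel₀ hdZ this
  have hsupp : Function.support fm ⊆ Set.range (fun t : ℤ => m * q + d * t) := by
    intro n hn
    rw [Function.mem_support, hfm_def] at hn
    simp only at hn
    by_cases h : (d:ℤ) ∣ n - m * q
    · obtain ⟨t, ht⟩ := h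
      refine ⟨t, ?_⟩
      simp only
      linarith
    · exact ((hn (if_neg h)).elim)
  rw [← Function.Injective.tsum_eq hinj hsupp]
  apply tsum_congr
  intro t
  have hdvd : (d:ℤ) ∣ (m * q + d * t) - m * q := ⟨t, by ring⟩
  simp only [hfm_def]
  rw [if_pos hdvd]
  congr 1
  push_cast
  ring

end PsiEq

section ZetaTail

lemma nat_tail_bound (k : ℕ) (hk : 1 ≤ k) (G : ℕ → ℝ)
    (hG : ∀ n, G n = 0 ∨ (G n = ((n : ℝ) ^ 2)⁻¹ ∧ k ≤ n)) (hsum : Summable G) :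
    ∑' n : ℕ, G n ≤ 2 / k := by
  have hGnonneg : ∀ n, 0 ≤ G n := by
    intro n
    rcases hG n with h | ⟨h, _⟩ <;> rw [h] <;> positivity
  apply Summable.tsum_le_of_sum_le hsum
  intro s
  set M : ℕ := s.sup id with hM_def
  have step1 : ∀ n ∈ s, G n ≤ (if n ∈ Finset.Icc k M then ((n : ℝ) ^ 2)⁻¹ else 0) := by
    intro n hn
    rcases hG n with h | ⟨h, hkn⟩
    · rw [h]
      split_ifs
      · positivity
      · exact le_refl 0
    · exact le_of_eq (by rw [h, if_pos (Finset.mem_Icc.mpr ⟨hkn, Finset.le_sup (f := id) hn⟩)])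
  calc ∑ n ∈ s, G n ≤ ∑ n ∈ s, (if n ∈ Finset.Icc k M then ((n : ℝ) ^ 2)⁻¹ else 0) :=
        Finset.sum_le_sum step1
    _ = ∑ n ∈ s ∩ Finset.Icc k M, ((n : ℝ) ^ 2)⁻¹ := Finset.sum_ite_mem s _ _
    _ ≤ ∑ n ∈ Finset.Icc k M, ((n : ℝ) ^ 2)⁻¹ := by
        apply Finset.sum_le_sum_of_subset_of_nonneg inter_subset_right
        intro n _ _
        positivity
    _ ≤ 2 / k := by
        rcases le_or_gt k M with h | h
        · rw [Finset.Icc_eq_cons_Ioc h, Finset.sum_cons]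
          have h1 : ((k : ℝ) ^ 2)⁻¹ ≤ (k : ℝ)⁻¹ := by
            rw [sq]
            have hk1 : (1:ℝ) ≤ (k:ℝ) := by exact_mod_cast hk
            rw [mul_inv]
            calc (k:ℝ)⁻¹ * (k:ℝ)⁻¹ ≤ 1 * (k:ℝ)⁻¹ := by
                  apply mul_le_mul_of_nonneg_right _ (by positivity)
                  rw [inv_le_one_iff₀]
                  right; exact hk1
              _ = (k:ℝ)⁻¹ := one_mul _
          have h2 : ∑ i ∈ Finset.Ioc k M, ((i:ℝ) ^ 2)⁻¹ ≤ (k:ℝ)⁻¹ - (M:ℝ)⁻¹ :=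
            sum_Ioc_inv_sq_le_sub (Nat.one_le_iff_ne_zero.mp hk) h
          have h3 : (0:ℝ) ≤ (M:ℝ)⁻¹ := by positivity
          have : (2:ℝ)/k = (k:ℝ)⁻¹ + (k:ℝ)⁻¹ := by
            field_simp
            ring
          rw [this]
          push_cast
          linarith
        · rw [Finset.Icc_eq_empty (by omega), Finset.sum_empty]
          positivity

lemma zeta_tail (T : ℝ) (hT : 0 ≤ T) :
    ∑' v : ℤ, (if v ≠ 0 ∧ T < |(v : ℝ)| then ((v : ℝ) ^ 2)⁻¹ else 0) ≤ 8 / max 1 T := by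
  set F : ℤ → ℝ := fun v => if v ≠ 0 ∧ T < |(v : ℝ)| then ((v : ℝ) ^ 2)⁻¹ else 0 with hF_def
  have hFnonneg : ∀ v, 0 ≤ F v := by
    intro v
    simp only [hF_def]
    split_ifs <;> positivity
  have hFle : ∀ v : ℤ, F v ≤ (1 : ℝ) / (v : ℝ) ^ 2 := by
    intro v
    simp only [hF_def, one_div]
    split_ifs
    · exact le_refl _
    · positivity
  have hbase : Summable fun v : ℤ => (1 : ℝ) / (v : ℝ) ^ 2 := by
    rw [show (2 : ℕ) = (2 : ℕ) from rfl]
    exact_mod_cast Real.summable_one_div_int_pow.mpr (by norm_num)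
  have hFsum : Summable F :=
    Summable.of_nonneg_of_le hFnonneg hFle hbase
  set k : ℕ := ⌊max 1 T⌋₊ with hk_def
  have hx1 : (1:ℝ) ≤ max 1 T := le_max_left 1 T
  have hk1 : 1 ≤ k := by
    rw [hk_def]
    exact Nat.le_floor (by exact_mod_cast hx1)
  have hkle : (k : ℝ) ≤ max 1 T := Nat.floor_le (by linarith)
  have hkge : max 1 T ≤ 2 * k := by
    rcases le_or_gt (max 1 T) 2 with h | h
    · have : (1:ℝ) ≤ (k:ℝ) := by exact_mod_cast hk1
      linarith
    · have : max 1 T - 1 ≤ (k:ℝ) := by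
        have := Nat.sub_one_lt_floor (max 1 T)
        linarith
      linarith
  -- positive and negative parts
  have hpos_sum : Summable fun n : ℕ => F (n : ℤ) :=
    hFsum.comp_injective (fun a b h => by exact_mod_cast h)
  have hneg_sum : Summable fun n : ℕ => F (-((n : ℤ) + 1)) :=
    hFsum.comp_injective (fun a b h => by simp only [neg_inj, add_left_inj] at h; exact_mod_cast h)
  have hsplit : ∑' v : ℤ, F v = (∑' n : ℕ, F (n : ℤ)) + ∑' n : ℕ, F (-((n : ℤ) + 1)) :=
    ((hpos_sum.hasSum.of_nat_of_neg_add_one hneg_sum.hasSum).tsum_eq).trans rfl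
  -- bound the positive part
  have hGpos : ∀ n : ℕ, F (n : ℤ) = 0 ∨ (F (n : ℤ) = ((n : ℝ) ^ 2)⁻¹ ∧ k ≤ n) := by
    intro n
    simp only [hF_def]
    split_ifs with h
    · right
      obtain ⟨hn0, hnT⟩ := h
      constructor
      · norm_num
      · have hn1 : (1:ℝ) ≤ (n:ℝ) := by
          have : n ≠ 0 := by exact_mod_cast hn0
          exact_mod_cast Nat.one_le_iff_ne_zero.mpr this
        have habs : |((n:ℤ):ℝ)| = (n:ℝ) := by
          push_cast
          exact abs_of_nonneg (by positivity)
        rw [habs] at hnT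
        have : (k:ℝ) ≤ (n:ℝ) := hkle.trans (max_le hn1 hnT.le)
        exact_mod_cast this
    · left; rfl
  have hpos_le : ∑' n : ℕ, F (n : ℤ) ≤ 2 / k := nat_tail_bound k hk1 _ hGpos hpos_sum
  -- bound the negative part by comparison with the positive part
  have hneg_le : ∑' n : ℕ, F (-((n : ℤ) + 1)) ≤ ∑' n : ℕ, F (n : ℤ) := by
    have hFeven : ∀ n : ℕ, F (-((n : ℤ) + 1)) = F ((n : ℤ) + 1) := by
      intro n
      simp only [hF_def, ne_eq, neg_eq_zero]
      push_cast
      rw [abs_neg, neg_pow]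
      norm_num
    calc ∑' n : ℕ, F (-((n : ℤ) + 1)) = ∑' n : ℕ, F ((n : ℕ) + 1 : ℤ) := by
          apply tsum_congr
          intro n
          rw [hFeven n]
      _ ≤ ∑' n : ℕ, F (n : ℤ) := by
          apply Summable.tsum_le_tsum_of_inj (fun n : ℕ => n + 1) (fun a b h => by simpa using h)
            (fun c _ => hFnonneg _) (fun n => le_of_eq (by push_cast; rfl)) _ hpos_sum
          exact hpos_sum.comp_injective (fun a b h => by simpa using h)
  have hk2 : (0:ℝ) < k := by exact_mod_cast hk1
  calc ∑' v : ℤ, F v ≤ 2 / k + 2 / k := by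
        rw [hsplit]
        exact add_le_add hpos_le (le_trans hneg_le hpos_le)
    _ = 4 / k := by ring
    _ ≤ 8 / max 1 T := by
        rw [div_le_div_iff₀ hk2 (by linarith)]
        linarith

end ZetaTail

section Main

set_option maxHeartbeats 3000000 in
/-- Truncation of the Poisson expansion: with `|α_m| ≤ 1` and `d ∼ D`,
`ψ(λ,N,α) = (N Ŵ(0)/d) Σ_{m≤N} α_m + ψ₁(λ,N,α,δ) + O_{δ,A}(N^{-A})`, where `ψ₁` is the part
of the expansion with `0 < |v| ≤ D N^{-1+δ}`. -/
theorem psi_truncated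
    (W : ℝ → ℝ) (hW1 : ContDiff ℝ (⊤ : ℕ∞) W) (hW2 : ∀ x, 0 ≤ W x)
    (hW3 : tsupport W ⊆ Set.Icc 0 1)
    (δ A : ℝ) (hδ : 0 < δ) (hA : 0 < A) :
    ∃ C : ℝ, 0 < C ∧
      ∀ (d N : ℕ), 1 ≤ d → 1 ≤ N → ∀ D : ℝ, D ≤ (d : ℝ) → (d : ℝ) < 2 * D →
      ∀ (B : Matrix (Fin 2) (Fin 2) ℤ) (L : Submodule ℤ (ℤ × ℤ)),
      L = Submodule.span ℤ {(B 0 0, B 0 1), (B 1 0, B 1 1)} →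
      B.det = (d : ℤ) →
      0 < B 0 0 →
      IsCoprime (B 0 0) (B 1 0) →
      ∀ Bbar : ℤ, B 0 0 ∣ (Bbar * B 1 0 - 1) →
      ∀ (α : ℤ → ℂ), (∀ m, ‖α m‖ ≤ 1) →
      ‖psi L N α W -
          ((N : ℂ) * FourierTransform.fourier (fun x : ℝ => (W x : ℂ)) 0 / (d : ℂ)) *
            (∑ m ∈ Finset.Icc (1 : ℤ) (N : ℤ), α m) -
          ((N : ℂ) / (d : ℂ)) *
            ∑' v : ℤ,
              (if v ≠ 0 ∧ |(v : ℝ)| ≤ D * (N : ℝ) ^ (-1 + δ) then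
                FourierTransform.fourier (fun x : ℝ => (W x : ℂ)) ((v : ℝ) * N / d) *
                  ∑ m ∈ Finset.Icc (1 : ℤ) (N : ℤ), α m *
                    eFn (((m * v * (B 0 1 + (d : ℤ) * Bbar) : ℤ) : ℝ) /
                      (((d : ℤ) * B 0 0 : ℤ) : ℝ))
              else 0)‖
        ≤ C * (N : ℝ) ^ (-A) := by
  classical
  set k : ℕ := ⌈(A + 1) / δ⌉₊ with hk_def
  obtain ⟨C', hC'0, hC'⟩ := decayW hW1 hW3 (k + 2)
  obtain ⟨C2, hC20, hC2⟩ := decayW hW1 hW3 2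
  refine ⟨16 * 2 ^ k * C', by positivity, ?_⟩
  intro d N hd hN D hDd hdD B L hL hdet hpos hcop Bbar hBbar α hα
  have hdR : (0:ℝ) < d := by exact_mod_cast hd
  have hNR : (0:ℝ) < N := by exact_mod_cast hN
  have hNR1 : (1:ℝ) ≤ N := by exact_mod_cast hN
  have hD0 : (0:ℝ) < D := by linarith
  have hNδ0 : (0:ℝ) < (N:ℝ) ^ δ := Real.rpow_pos_of_pos hNR δ
  set T : ℝ := D * (N : ℝ) ^ (-1 + δ) with hT_def
  have hT0 : 0 < T := by
    have := Real.rpow_pos_of_pos hNR (-1 + δ)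
    positivity
  obtain ⟨q, hq, hchar⟩ := lattice_char d B L hL hdet hpos hcop Bbar hBbar
  simp only [show (fun x : ℝ => (W x : ℂ)) = Wc W from rfl]
  -- abbreviations
  set S : ℤ → ℂ := fun v => ∑ m ∈ Finset.Icc (1:ℤ) (N:ℤ), α m *
      eFn (((m * v * (B 0 1 + (d : ℤ) * Bbar) : ℤ) : ℝ) / (((d : ℤ) * B 0 0 : ℤ) : ℝ))
      with hS_def
  set term : ℤ → ℂ := fun v => FourierTransform.fourier (Wc W) ((v : ℝ) * N / d) * S v with hterm_def
  -- the phase argument identity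
  have hB00R : (0:ℝ) < (B 0 0 : ℝ) := by exact_mod_cast hpos
  have harg : ∀ m v : ℤ, ((m * v * (B 0 1 + (d : ℤ) * Bbar) : ℤ) : ℝ) /
      (((d : ℤ) * B 0 0 : ℤ) : ℝ) = (v : ℝ) * ((m * q : ℤ) : ℝ) / (d : ℝ) := by
    intro m v
    have hqR : (B 0 0 : ℝ) * (q : ℝ) = (B 0 1 : ℝ) + (d : ℝ) * (Bbar : ℝ) := by exact_mod_cast hq
    push_cast
    rw [← hqR]
    have h1 : (B 0 0 : ℝ) ≠ 0 := ne_of_gt hB00R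
    have h2 : (d : ℝ) ≠ 0 := ne_of_gt hdR
    field_simp
  -- basic bounds
  have hcard : (Finset.Icc (1:ℤ) (N:ℤ)).card = N := by
    rw [Int.card_Icc]
    simp
  have hSle : ∀ v, ‖S v‖ ≤ (N:ℝ) := by
    intro v
    rw [hS_def]
    refine le_trans (norm_sum_le _ _) ?_
    have hle : ∀ m ∈ Finset.Icc (1:ℤ) (N:ℤ), ‖α m *
        eFn (((m * v * (B 0 1 + (d : ℤ) * Bbar) : ℤ) : ℝ) / (((d : ℤ) * B 0 0 : ℤ) : ℝ))‖ ≤ 1 := by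
      intro m _
      rw [norm_mul, norm_eFn, mul_one]
      exact hα m
    refine le_trans (Finset.sum_le_sum hle) ?_
    rw [Finset.sum_const, hcard, nsmul_eq_mul, mul_one]
  -- summability of the Fourier coefficients
  have hxiabs : ∀ v : ℤ, |(v : ℝ) * N / d| = |(v:ℝ)| * N / d := by
    intro v
    rw [abs_div, abs_mul, abs_of_pos hNR, abs_of_pos hdR]
  have hFWle : ∀ v : ℤ, v ≠ 0 →
      ‖FourierTransform.fourier (Wc W) ((v : ℝ) * N / d)‖ ≤ C2 * ((d:ℝ)/N)^2 * ((v:ℝ)^2)⁻¹ := by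
    intro v hv
    have hv1 : (1:ℝ) ≤ |(v:ℝ)| := by
      have : (1:ℤ) ≤ |v| := Int.one_le_abs (by exact_mod_cast hv)
      push_cast at this ⊢
      exact_mod_cast this
    have hvpos : (0:ℝ) < |(v:ℝ)| := by linarith
    have hxipos : (0:ℝ) < |(v : ℝ) * N / d| := by rw [hxiabs]; positivity
    have h := hC2 ((v : ℝ) * N / d)
    rw [← le_div_iff₀' (by positivity : (0:ℝ) < |(v : ℝ) * N / d| ^ 2)] at h
    refine h.trans (le_of_eq ?_)
    rw [hxiabs]
    rw [div_pow, mul_pow, sq_abs]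
    field_simp
  have hbase : Summable (fun v : ℤ => ((v:ℝ)^2)⁻¹) := by
    have := Real.summable_one_div_int_pow.mpr (show 1 < 2 by norm_num)
    simpa [one_div] using this
  have hFWsum : Summable (fun v : ℤ => ‖FourierTransform.fourier (Wc W) ((v : ℝ) * N / d)‖) := by
    apply Summable.of_norm_bounded_eventually (g := fun v : ℤ => C2 * ((d:ℝ)/N)^2 * ((v:ℝ)^2)⁻¹)
      ((hbase.mul_left _))
    rw [Filter.eventually_cofinite]
    apply Set.Finite.subset (Set.finite_singleton (0:ℤ))
    intro v hv
    simp only [Set.mem_setOf_eq, norm_norm] at hv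
    by_contra h0
    simp only [Set.mem_singleton_iff] at h0
    exact hv (hFWle v h0)
  have htermle : ∀ v : ℤ, ‖term v‖ ≤ ‖FourierTransform.fourier (Wc W) ((v : ℝ) * N / d)‖ * (N:ℝ) := by
    intro v
    rw [hterm_def]
    simp only
    rw [norm_mul]
    exact mul_le_mul_of_nonneg_left (hSle v) (norm_nonneg _)
  have htermnorm_sum : Summable (fun v : ℤ => ‖term v‖) :=
    Summable.of_nonneg_of_le (fun v => norm_nonneg _) htermle (hFWsum.mul_right _)
  have hterm_sum : Summable term := htermnorm_sum.of_norm
  have hs0 : Summable (fun v : ℤ => if v = 0 then term v else 0) := by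
    apply Summable.of_norm_bounded htermnorm_sum
    intro v
    split_ifs
    · exact le_refl _
    · simp [norm_nonneg]
  have hs1 : Summable (fun v : ℤ => if v ≠ 0 ∧ |(v:ℝ)| ≤ T then term v else 0) := by
    apply Summable.of_norm_bounded htermnorm_sum
    intro v
    split_ifs
    · exact le_refl _
    · simp [norm_nonneg]
  have hs2 : Summable (fun v : ℤ => if v ≠ 0 ∧ ¬(|(v:ℝ)| ≤ T) then term v else 0) := by
    apply Summable.of_norm_bounded htermnorm_sum
    intro v
    split_ifs
    · exact le_refl _
    · simp [norm_nonneg]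
  have hn2 : Summable (fun v : ℤ => ‖if v ≠ 0 ∧ ¬(|(v:ℝ)| ≤ T) then term v else 0‖) := by
    apply Summable.of_nonneg_of_le (fun v => norm_nonneg _) _ htermnorm_sum
    intro v
    split_ifs
    · exact le_refl _
    · simp [norm_nonneg]
  -- m-wise summability
  have hm_sum : ∀ m : ℤ, Summable (fun v : ℤ =>
      α m * (FourierTransform.fourier (Wc W) ((v : ℝ) * N / d)
        * eFn ((v:ℝ) * ((m*q : ℤ):ℝ) / (d:ℝ)))) := by
    intro m
    apply Summable.of_norm_bounded hFWsum
    intro v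
    rw [norm_mul, norm_mul, norm_eFn, mul_one]
    calc ‖α m‖ * ‖FourierTransform.fourier (Wc W) ((v : ℝ) * N / d)‖
        ≤ 1 * ‖FourierTransform.fourier (Wc W) ((v : ℝ) * N / d)‖ :=
          mul_le_mul_of_nonneg_right (hα m) (norm_nonneg _)
      _ = _ := one_mul _
  -- ψ as a v-sum
  have hψ : psi L N α W = ((N:ℂ)/d) * ∑' v, term v := by
    rw [psi_eq hW3 d N hd hN q L hchar α]
    have hinner : ∀ m ∈ Finset.Icc (1:ℤ) (N:ℤ),
        α m * ∑' t : ℤ, Wc W ((((m * q : ℤ) : ℝ) + (d:ℝ) * (t:ℝ)) / (N:ℝ))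
          = ∑' v : ℤ, ((N:ℂ)/d) * (α m * (FourierTransform.fourier (Wc W) ((v : ℝ) * N / d)
            * eFn ((v:ℝ) * ((m*q : ℤ):ℝ) / (d:ℝ)))) := by
      intro m _
      rw [poissonW hW1 hW3 d N hd hN (m * q)]
      calc α m * (((N:ℂ)/d) * ∑' v : ℤ, FourierTransform.fourier (Wc W) ((v : ℝ) * N / d)
            * eFn ((v:ℝ) * ((m*q : ℤ):ℝ) / (d:ℝ)))
          = (((N:ℂ)/d) * α m) * ∑' v : ℤ, FourierTransform.fourier (Wc W) ((v : ℝ) * N / d)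
            * eFn ((v:ℝ) * ((m*q : ℤ):ℝ) / (d:ℝ)) := by ring
        _ = ∑' v : ℤ, (((N:ℂ)/d) * α m) * (FourierTransform.fourier (Wc W) ((v : ℝ) * N / d)
            * eFn ((v:ℝ) * ((m*q : ℤ):ℝ) / (d:ℝ))) := tsum_mul_left.symm
        _ = ∑' v : ℤ, ((N:ℂ)/d) * (α m * (FourierTransform.fourier (Wc W) ((v : ℝ) * N / d)
            * eFn ((v:ℝ) * ((m*q : ℤ):ℝ) / (d:ℝ)))) := by
              apply tsum_congr
              intro v
              ring
    rw [Finset.sum_congr rfl hinner]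
    rw [← Summable.tsum_finsetSum (fun m _ => ((hm_sum m).mul_left _))]
    rw [← tsum_mul_left]
    apply tsum_congr
    intro v
    rw [← Finset.mul_sum]
    congr 1
    rw [hterm_def]
    simp only
    rw [hS_def]
    simp only
    rw [Finset.mul_sum]
    apply Finset.sum_congr rfl
    intro m _
    rw [harg m v]
    ring
  -- decomposition of the v-sum
  have hdecomp : ∀ v : ℤ, term v
      = (if v = 0 then term v else 0) + (if v ≠ 0 ∧ |(v:ℝ)| ≤ T then term v else 0)
        + (if v ≠ 0 ∧ ¬(|(v:ℝ)| ≤ T) then term v else 0) := by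
    intro v
    by_cases h0 : v = 0
    · simp [h0]
    · by_cases h1 : |(v:ℝ)| ≤ T
      · simp [h0, h1]
      · simp [h0, h1]
  have hsum_split : ∑' v, term v
      = (∑' v : ℤ, (if v = 0 then term v else 0))
        + (∑' v : ℤ, (if v ≠ 0 ∧ |(v:ℝ)| ≤ T then term v else 0))
        + (∑' v : ℤ, (if v ≠ 0 ∧ ¬(|(v:ℝ)| ≤ T) then term v else 0)) := by
    rw [tsum_congr hdecomp, Summable.tsum_add (hs0.add hs1) hs2, Summable.tsum_add hs0 hs1]
  have hT0eq : (∑' v : ℤ, (if v = 0 then term v else 0)) = term 0 := by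
    have : ∀ v : ℤ, (if v = 0 then term v else 0) = (if v = 0 then term 0 else 0) := by
      intro v
      by_cases h : v = 0
      · rw [h]
      · rw [if_neg h, if_neg h]
    rw [tsum_congr this]
    exact tsum_ite_eq 0 (fun _ => term 0)
  -- the v = 0 term is the main term
  have hmain : ((N : ℂ) * FourierTransform.fourier (Wc W) 0 / (d : ℂ)) *
      (∑ m ∈ Finset.Icc (1 : ℤ) (N : ℤ), α m) = ((N:ℂ)/d) * term 0 := by
    rw [hterm_def]
    simp only
    rw [hS_def]
    simp only
    have h1 : ((0:ℤ) : ℝ) * N / d = 0 := by simp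
    rw [h1]
    have h2 : ∀ m ∈ Finset.Icc (1:ℤ) (N:ℤ), α m *
        eFn (((m * 0 * (B 0 1 + (d : ℤ) * Bbar) : ℤ) : ℝ) / (((d : ℤ) * B 0 0 : ℤ) : ℝ)) = α m := by
      intro m _
      rw [show (m * 0 * (B 0 1 + (d : ℤ) * Bbar) : ℤ) = 0 by ring]
      simp [eFn_zero]
    rw [Finset.sum_congr rfl h2]
    ring
  -- identify the error term
  have hkey : psi L N α W -
      ((N : ℂ) * FourierTransform.fourier (Wc W) 0 / (d : ℂ)) *
        (∑ m ∈ Finset.Icc (1 : ℤ) (N : ℤ), α m) -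
      ((N : ℂ) / (d : ℂ)) * (∑' v : ℤ, (if v ≠ 0 ∧ |(v:ℝ)| ≤ T then term v else 0))
      = ((N:ℂ)/d) * ∑' v : ℤ, (if v ≠ 0 ∧ ¬(|(v:ℝ)| ≤ T) then term v else 0) := by
    rw [hψ, hsum_split, hT0eq, hmain]
    ring
  -- the goal is about exactly this expression
  rw [show ∑' v : ℤ,
      (if v ≠ 0 ∧ |(v : ℝ)| ≤ D * (N : ℝ) ^ (-1 + δ) then
        FourierTransform.fourier (Wc W) ((v : ℝ) * N / d) *
          ∑ m ∈ Finset.Icc (1 : ℤ) (N : ℤ), α m *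
            eFn (((m * v * (B 0 1 + (d : ℤ) * Bbar) : ℤ) : ℝ) /
              (((d : ℤ) * B 0 0 : ℤ) : ℝ))
      else 0) = ∑' v : ℤ, (if v ≠ 0 ∧ |(v:ℝ)| ≤ T then term v else 0) from rfl]
  rw [hkey]
  -- estimate the tail
  set K : ℝ := (N:ℝ) * (C' * (2 / (N:ℝ)^δ)^k * ((d:ℝ)/N)^2) with hK_def
  have hK0 : 0 ≤ K := by positivity
  have hT2le : ∀ v : ℤ, ‖if v ≠ 0 ∧ ¬(|(v:ℝ)| ≤ T) then term v else 0‖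
      ≤ K * (if v ≠ 0 ∧ T < |(v:ℝ)| then ((v:ℝ)^2)⁻¹ else 0) := by
    intro v
    by_cases h : v ≠ 0 ∧ ¬(|(v:ℝ)| ≤ T)
    · rw [if_pos h, if_pos ⟨h.1, not_le.mp h.2⟩]
      obtain ⟨hv0, hvT'⟩ := h
      have hvT : T < |(v:ℝ)| := not_le.mp hvT'
      have hv1 : (1:ℝ) ≤ |(v:ℝ)| := by
        have : (1:ℤ) ≤ |v| := Int.one_le_abs (by exact_mod_cast hv0)
        push_cast at this ⊢
        exact_mod_cast this
      have hvpos : (0:ℝ) < |(v:ℝ)| := by linarith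
      -- lower bound on the frequency
      have hNδ : (N:ℝ)^(-1+δ) * (N:ℝ) = (N:ℝ)^δ := by
        nth_rewrite 2 [show ((N:ℝ)) = (N:ℝ)^(1:ℝ) from (Real.rpow_one _).symm]
        rw [← Real.rpow_add hNR]
        norm_num
      have hξ1 : (N:ℝ)^δ / 2 ≤ |(v:ℝ)| * N / d := by
        calc (N:ℝ)^δ / 2 ≤ D * (N:ℝ)^δ / d := by
              rw [div_le_div_iff₀ (by norm_num) hdR]
              nlinarith [hNδ0, hdD]
          _ = T * N / d := by
              rw [hT_def, mul_assoc, hNδ]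
          _ ≤ |(v:ℝ)| * N / d := by gcongr
      -- Fourier decay
      have hFWv : ‖FourierTransform.fourier (Wc W) ((v : ℝ) * N / d)‖
          ≤ C' / |(v : ℝ) * N / d| ^ (k+2) := by
        have h := hC' ((v : ℝ) * N / d)
        have hxipos : (0:ℝ) < |(v : ℝ) * N / d| := by rw [hxiabs]; positivity
        rw [← le_div_iff₀' (by positivity)] at h
        exact h
      have hsplit2 : ((N:ℝ)^δ/2)^k * (|(v:ℝ)| * N / d)^2 ≤ |(v : ℝ) * N / d| ^ (k+2) := by
        rw [pow_add, hxiabs]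
        exact mul_le_mul_of_nonneg_right (pow_le_pow_left₀ (by positivity) hξ1 k)
          (by positivity)
      calc ‖term v‖ ≤ ‖FourierTransform.fourier (Wc W) ((v : ℝ) * N / d)‖ * (N:ℝ) := htermle v
        _ ≤ (C' / |(v : ℝ) * N / d| ^ (k+2)) * (N:ℝ) :=
            mul_le_mul_of_nonneg_right hFWv hNR.le
        _ ≤ (C' / (((N:ℝ)^δ/2)^k * (|(v:ℝ)| * N / d)^2)) * (N:ℝ) := by
            have hden : (0:ℝ) < ((N:ℝ)^δ/2)^k * (|(v:ℝ)| * N / d)^2 := by positivity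
            gcongr
        _ = K * ((v:ℝ)^2)⁻¹ := by
            rw [hK_def]
            have habs2 : (|(v:ℝ)| * (N:ℝ) / d)^2 = (v:ℝ)^2 * ((N:ℝ)/d)^2 := by
              rw [div_pow, mul_pow, sq_abs]
              ring
            rw [habs2]
            have hv2 : ((v:ℝ))^2 ≠ 0 := by positivity
            have hNδne : (N:ℝ)^δ ≠ 0 := hNδ0.ne'
            field_simp
            ring_nf
            rw [← mul_pow, ← mul_pow, ← mul_pow, mul_inv_cancel₀ hNδne]
            norm_num
    · rw [if_neg h, if_neg (fun hc => h ⟨hc.1, not_le.mpr hc.2⟩)]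
      simp
  have hzsumF : Summable (fun v : ℤ => if v ≠ 0 ∧ T < |(v:ℝ)| then ((v:ℝ)^2)⁻¹ else 0) := by
    apply Summable.of_nonneg_of_le _ _ hbase
    · intro v
      split_ifs <;> positivity
    · intro v
      split_ifs
      · exact le_refl _
      · positivity
  have htail : ∑' v : ℤ, ‖if v ≠ 0 ∧ ¬(|(v:ℝ)| ≤ T) then term v else 0‖
      ≤ K * (8 / max 1 T) := by
    calc ∑' v : ℤ, ‖if v ≠ 0 ∧ ¬(|(v:ℝ)| ≤ T) then term v else 0‖
        ≤ ∑' v : ℤ, K * (if v ≠ 0 ∧ T < |(v:ℝ)| then ((v:ℝ)^2)⁻¹ else 0) :=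
          Summable.tsum_le_tsum hT2le hn2 (hzsumF.mul_left K)
      _ = K * ∑' v : ℤ, (if v ≠ 0 ∧ T < |(v:ℝ)| then ((v:ℝ)^2)⁻¹ else 0) := tsum_mul_left
      _ ≤ K * (8 / max 1 T) := mul_le_mul_of_nonneg_left (zeta_tail T hT0.le) hK0
  -- final numeric computation
  have hnorm : ‖((N:ℂ)/d) * ∑' v : ℤ, (if v ≠ 0 ∧ ¬(|(v:ℝ)| ≤ T) then term v else 0)‖
      ≤ ((N:ℝ)/d) * (K * (8 / max 1 T)) := by
    rw [norm_mul, norm_div, Complex.norm_natCast, Complex.norm_natCast]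
    apply mul_le_mul_of_nonneg_left _ (by positivity)
    exact le_trans (norm_tsum_le_tsum_norm hn2) htail
  refine le_trans hnorm ?_
  -- d / max 1 T ≤ 2 N^{1-δ}
  have hmaxpos : (0:ℝ) < max 1 T := lt_of_lt_of_le one_pos (le_max_left 1 T)
  have hcancel : (N:ℝ)^(1-δ) * (N:ℝ)^(-1+δ) = 1 := by
    rw [← Real.rpow_add hNR]
    norm_num
  have hN1δ : (0:ℝ) < (N:ℝ)^(1-δ) := Real.rpow_pos_of_pos hNR _
  have hdmax : (d:ℝ) / max 1 T ≤ 2 * (N:ℝ)^(1-δ) := by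
    rcases le_or_gt 1 T with h | h
    · rw [max_eq_right h, div_le_iff₀ (by linarith : (0:ℝ) < T)]
      have h2 : 2 * (N:ℝ)^(1-δ) * T = 2 * D * ((N:ℝ)^(1-δ) * (N:ℝ)^(-1+δ)) := by
        rw [hT_def]; ring
      rw [h2, hcancel, mul_one]
      linarith
    · rw [max_eq_left h.le, div_one]
      have hDT : D = T * (N:ℝ)^(1-δ) := by
        have h3 : D * (N:ℝ)^(-1+δ) * (N:ℝ)^(1-δ) = D * ((N:ℝ)^(1-δ) * (N:ℝ)^(-1+δ)) := by ring
        rw [hT_def, h3, hcancel, mul_one]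
      nlinarith [hdD, hN1δ]
  -- put it together
  have hEeq : ((N:ℝ)/d) * (K * (8 / max 1 T))
      = 8 * 2^k * C' * (((N:ℝ)^δ)^k)⁻¹ * ((d:ℝ) / max 1 T) := by
    rw [hK_def, div_pow]
    field_simp
  rw [hEeq]
  have hstep1 : 8 * 2^k * C' * (((N:ℝ)^δ)^k)⁻¹ * ((d:ℝ) / max 1 T)
      ≤ 8 * 2^k * C' * (((N:ℝ)^δ)^k)⁻¹ * (2 * (N:ℝ)^(1-δ)) := by
    apply mul_le_mul_of_nonneg_left hdmax (by positivity)
  refine le_trans hstep1 ?_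
  have hrw : (((N:ℝ)^δ)^k)⁻¹ = (N:ℝ)^(-(δ * k)) := by
    rw [← Real.rpow_natCast ((N:ℝ)^δ) k, ← Real.rpow_mul hNR.le, ← Real.rpow_neg hNR.le]
  rw [hrw]
  have hfin : 8 * 2^k * C' * (N:ℝ)^(-(δ * k)) * (2 * (N:ℝ)^(1-δ))
      = 16 * 2^k * C' * ((N:ℝ)^(-(δ * k)) * (N:ℝ)^(1-δ)) := by ring
  rw [hfin, ← Real.rpow_add hNR]
  apply mul_le_mul_of_nonneg_left _ (by positivity)
  apply Real.rpow_le_rpow_of_exponent_le hNR1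
  have hkA : (A + 1) / δ ≤ (k:ℝ) := Nat.le_ceil _
  have : A + 1 ≤ δ * k := by
    rw [div_le_iff₀ hδ] at hkA
    linarith
  linarith

end Main
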